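/- arXiv:2212.08219 — 4 statements merged into one kernel-verified Lean document; each statement's English description precedes it below -/
import Mathlib

section
/- Under μ̄ + μ̲ < 1, there is no pair (X, Y) with Y = (A/B)X, X > 0, satisfying both (1-μ̲)X + μ̲Y ≥ c and μ̄X + (1-μ̄)Y ≤ c, where A = μ̄(1-μ̲) > B = μ̲(1-μ̄) and c > 0. That is, if Y = (A/B)X with X > 0 and (1-μ̲)X + μ̲Y ≥ c, then μ̄X + (1-μ̄)Y > c. -/
/-- Under μ̄ + μ̲ < 1, with A = μ̄(1-μ̲), B = μ̲(1-μ̄): if Y = (A/B)X with X > 0 and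
(1-μ̲)X + μ̲Y ≥ c (c > 0), then μ̄X + (1-μ̄)Y > c. -/
theorem stmt_7 (μl μh c X Y : ℝ) (h0 : 0 < μl) (hlh : μl < μh) (h1 : μh < 1)
    (hsum : μh + μl < 1) (hc : 0 < c) (hX : 0 < X)
    (hY : Y = (μh * (1 - μl) / (μl * (1 - μh))) * X)
    (hICm : (1 - μl) * X + μl * Y ≥ c) :
    μh * X + (1 - μh) * Y > c := by
  have hB : 0 < μl * (1 - μh) := mul_pos h0 (by linarith)
  have hYX : X < Y := by
    rw [hY]
    have hr : 1 < μh * (1 - μl) / (μl * (1 - μh)) := by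
      rw [lt_div_iff₀ hB]; nlinarith
    nlinarith
  nlinarith [mul_pos (by linarith : (0:ℝ) < 1 - μh - μl) (by linarith : 0 < Y - X)]
end

section
/- With A = μ̄(1-μ̲), B = μ̲(1-μ̄), μ̄ + μ̲ > 1, the functions φ(γ) = (γA-B)(γB-A)/((γ²-1)μ̲(1-μ̲)(A+B)) and g(γ) = (γ-1)/(2(γ+1)) satisfy: φ(γ)/g(γ) is strictly increasing on (A/B, ∞), with derivative d/dγ [φ(γ)/g(γ)] = 2(A-B)²(γ+1)/(μ̲(1-μ̲)(A+B)(γ-1)³) > 0. -/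
/-! On `γ > A / B > 1` the factor `γ + 1` cancels and `φ γ / g γ = 2 (γA - B)(γB - A) / (c (γ - 1)²)`
with `c = μ̲(1 - μ̲)(A + B) > 0`; differentiating this quotient gives `2 (A - B)² (γ + 1) / (c (γ - 1)³)`,
which is positive because `A - B = μ̄ - μ̲ > 0`. -/

theorem hasDerivAt_mul_sub_mul_sub_div_sub_one_sq (a b γ : ℝ) (hγ : γ ≠ 1) :
    HasDerivAt (fun x => (x * a - b) * (x * b - a) / (x - 1) ^ 2)
      ((a - b) ^ 2 * (γ + 1) / (γ - 1) ^ 3) γ := by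
  have hnum : HasDerivAt (fun x => (x * a - b) * (x * b - a))
      (a * (γ * b - a) + (γ * a - b) * b) γ :=
    (((hasDerivAt_id γ).mul_const a).sub_const b).mul
      (((hasDerivAt_id γ).mul_const b).sub_const a) |>.congr_deriv (by simp)
  have hden : HasDerivAt (fun x => (x - 1) ^ 2) (2 * (γ - 1)) γ := by
    simpa using ((hasDerivAt_id γ).sub_const 1).fun_pow 2
  have hγ' : γ - 1 ≠ 0 := sub_ne_zero.mpr hγ
  refine (hnum.div hden (pow_ne_zero 2 hγ')).congr_deriv ?_
  field_simp
  ring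

theorem ratio_eq_two_div_mul_div_sub_one_sq (a b c γ : ℝ) (hγ₁ : γ ≠ 1) (hγ₂ : γ ≠ -1) :
    (γ * a - b) * (γ * b - a) / ((γ ^ 2 - 1) * c) / ((γ - 1) / (2 * (γ + 1)))
      = 2 / c * ((γ * a - b) * (γ * b - a) / (γ - 1) ^ 2) := by
  have : γ - 1 ≠ 0 := sub_ne_zero.mpr hγ₁
  have : γ + 1 ≠ 0 := fun h => hγ₂ (eq_neg_of_add_eq_zero_left h)
  rw [show γ ^ 2 - 1 = (γ - 1) * (γ + 1) by ring]
  field_simp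

theorem hasDerivAt_ratio (a b c γ : ℝ) (hγ₁ : γ ≠ 1) (hγ₂ : γ ≠ -1) :
    HasDerivAt (fun x => (x * a - b) * (x * b - a) / ((x ^ 2 - 1) * c) / ((x - 1) / (2 * (x + 1))))
      (2 * (a - b) ^ 2 * (γ + 1) / (c * (γ - 1) ^ 3)) γ := by
  have hreduced := (hasDerivAt_mul_sub_mul_sub_div_sub_one_sq a b γ hγ₁).const_mul (2 / c)
  refine (hreduced.congr_of_eventuallyEq ?_).congr_deriv (by field_simp)
  filter_upwards [eventually_ne_nhds hγ₁, eventually_ne_nhds hγ₂] with x hx₁ hx₂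
  exact ratio_eq_two_div_mul_div_sub_one_sq a b c x hx₁ hx₂

theorem stmt_9_general (μl μh : ℝ) (h0 : 0 < μl) (hlh : μl < μh) (h1 : μh < 1)
    (A B : ℝ) (hA : A = μh * (1 - μl)) (hB : B = μl * (1 - μh))
    (φ g : ℝ → ℝ)
    (hφ : ∀ γ : ℝ, φ γ = (γ * A - B) * (γ * B - A) / ((γ ^ 2 - 1) * (μl * (1 - μl)) * (A + B)))
    (hg : ∀ γ : ℝ, g γ = (γ - 1) / (2 * (γ + 1))) :
    StrictMonoOn (fun γ => φ γ / g γ) (Set.Ioi (A / B)) ∧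
    ∀ γ : ℝ, A / B < γ →
      deriv (fun γ => φ γ / g γ) γ
        = 2 * (A - B) ^ 2 * (γ + 1) / (μl * (1 - μl) * (A + B) * (γ - 1) ^ 3) ∧
      0 < deriv (fun γ => φ γ / g γ) γ := by
  have hB0 : 0 < B := by rw [hB]; exact mul_pos h0 (by linarith)
  have hAB : 0 < A - B := by rw [hA, hB]; linarith
  have hAB1 : 1 < A / B := (one_lt_div hB0).mpr (by linarith)
  have hratio : (fun γ => φ γ / g γ) = fun x =>
      (x * A - B) * (x * B - A) / ((x ^ 2 - 1) * (μl * (1 - μl) * (A + B))) /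
        ((x - 1) / (2 * (x + 1))) := by
    funext x; rw [hφ, hg, mul_assoc]
  have hderiv : ∀ γ, A / B < γ → HasDerivAt (fun γ => φ γ / g γ)
      (2 * (A - B) ^ 2 * (γ + 1) / (μl * (1 - μl) * (A + B) * (γ - 1) ^ 3)) γ := by
    intro γ hγ
    have hγ1 : 1 < γ := hAB1.trans hγ
    rw [hratio]
    exact hasDerivAt_ratio A B _ γ hγ1.ne' (by linarith)
  have hpos : ∀ γ, A / B < γ →
      0 < 2 * (A - B) ^ 2 * (γ + 1) / (μl * (1 - μl) * (A + B) * (γ - 1) ^ 3) := by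
    intro γ hγ
    have : 0 < 1 - μl := by linarith
    have : 0 < γ - 1 := by linarith
    have : 0 < A + B := by linarith
    exact div_pos (mul_pos (mul_pos two_pos (pow_pos hAB 2)) (by linarith)) (by positivity)
  refine ⟨strictMonoOn_of_deriv_pos (convex_Ioi _)
    (fun γ hγ => (hderiv γ hγ).continuousAt.continuousWithinAt) fun γ hγ => ?_,
    fun γ hγ => ⟨(hderiv γ hγ).deriv, (hderiv γ hγ).deriv ▸ hpos γ hγ⟩⟩
  rw [interior_Ioi] at hγ
  exact (hderiv γ hγ).deriv ▸ hpos γ hγ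

/-- With A = μ̄(1-μ̲), B = μ̲(1-μ̄) and μ̄ + μ̲ > 1, the ratio φ/g is strictly
increasing on (A/B, ∞), with derivative 2(A-B)²(γ+1)/(μ̲(1-μ̲)(A+B)(γ-1)³) > 0. -/
theorem stmt_9 (μl μh : ℝ) (h0 : 0 < μl) (hlh : μl < μh) (h1 : μh < 1)
    (hsum : 1 < μh + μl)
    (A B : ℝ) (hA : A = μh * (1 - μl)) (hB : B = μl * (1 - μh))
    (φ g : ℝ → ℝ)
    (hφ : ∀ γ : ℝ, φ γ = (γ * A - B) * (γ * B - A) / ((γ ^ 2 - 1) * (μl * (1 - μl)) * (A + B)))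
    (hg : ∀ γ : ℝ, g γ = (γ - 1) / (2 * (γ + 1))) :
    StrictMonoOn (fun γ => φ γ / g γ) (Set.Ioi (A / B)) ∧
    ∀ γ : ℝ, A / B < γ →
      deriv (fun γ => φ γ / g γ) γ
        = 2 * (A - B) ^ 2 * (γ + 1) / (μl * (1 - μl) * (A + B) * (γ - 1) ^ 3) ∧
      0 < deriv (fun γ => φ γ / g γ) γ :=
  stmt_9_general μl μh h0 hlh h1 A B hA hB φ g hφ hg
end

section
/- With A = μ̄(1-μ̲), B = μ̲(1-μ̄), μ̄ + μ̲ > 1: lim_{γ→∞} φ(γ) = μ̄(1-μ̄)/(A+B) < 1/2 = lim_{γ→∞} g(γ), where φ(γ) = (γA-B)(γB-A)/((γ²-1)μ̲(1-μ̲)(A+B)) and g(γ) = (γ-1)/(2(γ+1)). Consequently φ(γ) < g(γ) for all γ ≥ A/B (using that φ/g is increasing and φ(A/B)=0). -/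
/-!
Expanding, `(γA - B)(γB - A) = AB(γ - 1)² - (A - B)²γ`, so for `γ > 1`
`φ(γ) ≤ L · (γ - 1)/(γ + 1)` with `L = AB / (μ̲(1 - μ̲)(A + B)) = μ̄(1 - μ̄)/(A + B)`, while
`g(γ) = ½ · (γ - 1)/(γ + 1)`. Hence `φ < g` on `γ > 1` (in particular on `γ ≥ A/B > 1`) exactly
because `L < ½`, which is `(μ̄ - μ̲)(1 - 2μ̄) < 0`. Both limits follow by substituting `γ⁻¹ → 0`.
-/

open Filter Topology

theorem tendsto_sub_one_div_add_one : Tendsto (fun γ : ℝ => (γ - 1) / (γ + 1)) atTop (𝓝 1) := by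
  have hlim : Tendsto (fun γ : ℝ => (1 - γ⁻¹) / (1 + γ⁻¹)) atTop (𝓝 ((1 - 0) / (1 + 0))) :=
    (tendsto_const_nhds.sub tendsto_inv_atTop_zero).div
      (tendsto_const_nhds.add tendsto_inv_atTop_zero) (by norm_num)
  rw [sub_zero, add_zero, div_one] at hlim
  refine hlim.congr' ?_
  filter_upwards [eventually_gt_atTop 0] with γ hγ
  field_simp

section QuadraticRatio

variable (A B : ℝ)

theorem tendsto_mul_sub_mul_mul_sub_div_sq_sub_one :
    Tendsto (fun γ : ℝ => (γ * A - B) * (γ * B - A) / (γ ^ 2 - 1)) atTop (𝓝 (A * B)) := by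
  have hlim : Tendsto (fun γ : ℝ => (A - B * γ⁻¹) * (B - A * γ⁻¹) / (1 - γ⁻¹ ^ 2)) atTop
      (𝓝 ((A - B * 0) * (B - A * 0) / (1 - 0 ^ 2))) := by
    have hinv := tendsto_inv_atTop_zero (𝕜 := ℝ)
    exact ((tendsto_const_nhds.sub (tendsto_const_nhds.mul hinv)).mul
      (tendsto_const_nhds.sub (tendsto_const_nhds.mul hinv))).div
      (tendsto_const_nhds.sub (hinv.pow 2)) (by norm_num)
  rw [show (A - B * 0) * (B - A * 0) / (1 - (0 : ℝ) ^ 2) = A * B by norm_num] at hlim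
  refine hlim.congr' ?_
  filter_upwards [eventually_gt_atTop 1] with γ hγ
  have hγ2 : γ ^ 2 - 1 ≠ 0 := by nlinarith
  field_simp

theorem mul_sub_mul_mul_sub_div_sq_sub_one_le {γ : ℝ} (hγ : 1 < γ) :
    (γ * A - B) * (γ * B - A) / (γ ^ 2 - 1) ≤ A * B * ((γ - 1) / (γ + 1)) := by
  have hexpand : (γ * A - B) * (γ * B - A) = A * B * (γ - 1) ^ 2 - (A - B) ^ 2 * γ := by ring
  have hfactor : γ ^ 2 - 1 = (γ - 1) * (γ + 1) := by ring
  have hcancel : A * B * ((γ - 1) / (γ + 1)) * ((γ - 1) * (γ + 1)) = A * B * (γ - 1) ^ 2 := by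
    field_simp
  rw [hexpand, hfactor, div_le_iff₀ (mul_pos (by linarith) (by linarith)), hcancel]
  linarith [mul_nonneg (sq_nonneg (A - B)) (by linarith : (0 : ℝ) ≤ γ)]

end QuadraticRatio

theorem mul_one_sub_div_lt_half {a b : ℝ} (ha : 0 < a) (hab : a < b) (hb : b < 1)
    (hsum : 1 < a + b) : b * (1 - b) / (b * (1 - a) + a * (1 - b)) < 1 / 2 := by
  have hden : 0 < b * (1 - a) + a * (1 - b) := by
    have : 0 < b * (1 - a) := mul_pos (by linarith) (by linarith)
    have : 0 < a * (1 - b) := mul_pos ha (by linarith)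
    linarith
  rw [div_lt_iff₀ hden]
  nlinarith [mul_pos (sub_pos.mpr hab) (by linarith : (0 : ℝ) < 2 * b - 1)]

/-- With A = μ̄(1-μ̲), B = μ̲(1-μ̄), μ̄ + μ̲ > 1: φ tends to μ̄(1-μ̄)/(A+B) < 1/2,
g tends to 1/2, and φ(γ) < g(γ) for all γ ≥ A/B. -/
theorem stmt_10 (μl μh : ℝ) (h0 : 0 < μl) (hlh : μl < μh) (h1 : μh < 1)
    (hsum : 1 < μh + μl)
    (A B : ℝ) (hA : A = μh * (1 - μl)) (hB : B = μl * (1 - μh))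
    (φ g : ℝ → ℝ)
    (hφ : ∀ γ : ℝ, φ γ = (γ * A - B) * (γ * B - A) / ((γ ^ 2 - 1) * (μl * (1 - μl)) * (A + B)))
    (hg : ∀ γ : ℝ, g γ = (γ - 1) / (2 * (γ + 1))) :
    Filter.Tendsto φ Filter.atTop (nhds (μh * (1 - μh) / (A + B))) ∧
    μh * (1 - μh) / (A + B) < 1 / 2 ∧
    Filter.Tendsto g Filter.atTop (nhds (1 / 2)) ∧
    ∀ γ : ℝ, A / B ≤ γ → φ γ < g γ := by
  set D := μl * (1 - μl) * (A + B)
  have hφ' : φ = fun γ => (γ * A - B) * (γ * B - A) / (γ ^ 2 - 1) / D := by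
    funext γ; rw [hφ, mul_assoc, div_mul_eq_div_div]
  have hg' : g = fun γ => 1 / 2 * ((γ - 1) / (γ + 1)) := by
    funext γ; rw [hg, mul_comm, ← div_div]; ring
  have hBpos : 0 < B := by rw [hB]; exact mul_pos h0 (by linarith)
  have hABpos : 0 < A + B := by rw [hA, hB]; nlinarith
  have hlim : A * B / D = μh * (1 - μh) / (A + B) := by
    have hAB : A * B = μl * (1 - μl) * (μh * (1 - μh)) := by rw [hA, hB]; ring
    rw [hAB, mul_div_mul_left _ _ (mul_ne_zero h0.ne' (by linarith))]
  have hlt : μh * (1 - μh) / (A + B) < 1 / 2 := by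
    rw [hA, hB]; exact mul_one_sub_div_lt_half h0 hlh h1 (by linarith)
  refine ⟨?_, hlt, ?_, fun γ hγ => ?_⟩
  · rw [hφ', ← hlim]
    exact (tendsto_mul_sub_mul_mul_sub_div_sq_sub_one A B).div_const D
  · simpa [hg'] using tendsto_sub_one_div_add_one.const_mul (1 / 2 : ℝ)
  · have hγ : 1 < γ := (one_lt_div hBpos).mpr (by rw [hA, hB]; nlinarith) |>.trans_le hγ
    have hD : 0 < D := mul_pos (mul_pos h0 (by linarith)) hABpos
    have hr : 0 < (γ - 1) / (γ + 1) := div_pos (by linarith) (by linarith)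
    calc φ γ = (γ * A - B) * (γ * B - A) / (γ ^ 2 - 1) / D := by rw [hφ']
      _ ≤ A * B * ((γ - 1) / (γ + 1)) / D :=
        div_le_div_of_nonneg_right (mul_sub_mul_mul_sub_div_sq_sub_one_le A B hγ) hD.le
      _ = μh * (1 - μh) / (A + B) * ((γ - 1) / (γ + 1)) := by rw [← hlim]; ring
      _ < 1 / 2 * ((γ - 1) / (γ + 1)) := mul_lt_mul_of_pos_right hlt hr
      _ = g γ := by rw [hg']
end

section
/- If μ̲ > 1/2, then the function ΔI(γ) := I((μ̄,μ̲);γ) - I((μ̲,μ̲);γ) satisfies ΔI(A/B) < 0 and dΔI/dγ = (μ̄-μ̲)(1-2μ̲)ln γ/(γ+1)² < 0 for γ > A/B; consequently ΔI(γ) < 0 for all γ ≥ A/B. -/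
/-!
At `γ = A / B` all three arguments of `h` in `I((μ̄,μ̲);γ)` equal `1`, so that rate vanishes and
`ΔI(A/B) = -2μ̲(1-μ̲)(log 2 - H(A/(A+B)))` with `H` the binary entropy; this is negative because
`A ≠ B` and `H` attains `log 2` only at `1/2`. For `γ > A/B > 1` the factors `log γ > 0` and
`1 - 2μ̲ < 0` give the sign of the derivative, and `ΔI` is continuous on `[A/B, ∞)`, so it is
strictly decreasing there.
-/

open Real Set

/-- The rate `I((μ̄,μ̲);γ)` written through `A = μ̄(1-μ̲)` and `B = μ̲(1-μ̄)`. -/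
noncomputable def crossRate (h : ℝ → ℝ) (A B γ : ℝ) : ℝ :=
  A * h (γ * (γ * A - B) / ((γ ^ 2 - 1) * A))
    + B * h ((γ * A - B) / ((γ ^ 2 - 1) * B))
    - (A + B) * h ((γ * A - B) / ((γ - 1) * (A + B)))

lemma mul_log_add_one_sub_mul_log_one_sub (x : ℝ) :
    x * log x + (1 - x) * log (1 - x) = -binEntropy x := by
  rw [binEntropy, log_inv, log_inv]; ring

/-- All three arguments of `h` equal `1` at `γ = A / B`. -/
lemma crossRate_div_self (h : ℝ → ℝ) {A B : ℝ} (hB : 0 < B) (hBA : B < A) :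
    crossRate h A B (A / B) = 0 := by
  have hA : 0 < A := hB.trans hBA
  have hsq : (A / B) ^ 2 - 1 ≠ 0 := by
    have : 1 < A / B := (one_lt_div hB).2 hBA
    nlinarith
  have hsub : A / B - 1 ≠ 0 := by
    rw [sub_ne_zero, ne_eq, div_eq_one_iff_eq hB.ne']; exact hBA.ne'
  have e1 : A / B * (A / B * A - B) / (((A / B) ^ 2 - 1) * A) = 1 := by
    rw [div_eq_one_iff_eq (mul_ne_zero hsq hA.ne')]; field_simp
  have e2 : (A / B * A - B) / (((A / B) ^ 2 - 1) * B) = 1 := by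
    rw [div_eq_one_iff_eq (mul_ne_zero hsq hB.ne')]; field_simp
  have e3 : (A / B * A - B) / ((A / B - 1) * (A + B)) = 1 := by
    rw [div_eq_one_iff_eq (mul_ne_zero hsub (by positivity))]; field_simp; ring
  rw [crossRate, e1, e2, e3]; ring

lemma continuousAt_crossRate {h : ℝ → ℝ} (hc : Continuous h) {A B γ : ℝ} (hA : A ≠ 0)
    (hB : B ≠ 0) (hAB : A + B ≠ 0) (hγ : γ ^ 2 ≠ 1) : ContinuousAt (crossRate h A B) γ := by
  have h₁ : (γ ^ 2 - 1) * A ≠ 0 := mul_ne_zero (sub_ne_zero.2 hγ) hA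
  have h₂ : (γ ^ 2 - 1) * B ≠ 0 := mul_ne_zero (sub_ne_zero.2 hγ) hB
  have h₃ : (γ - 1) * (A + B) ≠ 0 :=
    mul_ne_zero (sub_ne_zero.2 fun h1 => hγ (by rw [h1, one_pow])) hAB
  unfold crossRate
  fun_prop (disch := assumption)

lemma sub_mul_one_sub_two_mul_mul_log_div_neg {a b γ : ℝ} (hab : a < b) (ha : 1 / 2 < a)
    (hγ : 1 < γ) : (b - a) * (1 - 2 * a) * log γ / (γ + 1) ^ 2 < 0 := by
  have hcoef : (b - a) * (1 - 2 * a) < 0 := mul_neg_of_pos_of_neg (by linarith) (by linarith)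
  exact div_neg_of_neg_of_pos (mul_neg_of_neg_of_pos hcoef (log_pos hγ)) (by positivity)

theorem stmt_14_general (μl μh : ℝ) (hlh : μl < μh) (h1 : μh < 1)
    (hμl : 1 / 2 < μl)
    (A B : ℝ) (hA : A = μh * (1 - μl)) (hB : B = μl * (1 - μh))
    (h : ℝ → ℝ)
    (hh : ∀ x : ℝ, h x = x * Real.log x + (1 - x) * Real.log (1 - x))
    (ΔI : ℝ → ℝ)
    (hΔI : ∀ γ : ℝ, ΔI γ =
      (A * h (γ * (γ * A - B) / ((γ ^ 2 - 1) * A))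
        + B * h ((γ * A - B) / ((γ ^ 2 - 1) * B))
        - (A + B) * h ((γ * A - B) / ((γ - 1) * (A + B))))
      - 2 * μl * (1 - μl) * (h (γ / (γ + 1)) - h (1 / 2)))
    (hderiv : ∀ γ : ℝ, A / B < γ →
      deriv ΔI γ = (μh - μl) * (1 - 2 * μl) * Real.log γ / (γ + 1) ^ 2) :
    ΔI (A / B) < 0 ∧
    (∀ γ : ℝ, A / B < γ → deriv ΔI γ < 0) ∧
    (∀ γ : ℝ, A / B ≤ γ → ΔI γ < 0) := by
  obtain ⟨hB0, hBA⟩ : 0 < B ∧ B < A := by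
    subst hA hB; constructor <;> nlinarith
  have hA0 : 0 < A := hB0.trans hBA
  have h1AB : 1 < A / B := (one_lt_div hB0).2 hBA
  have hneg : h = fun x => -binEntropy x := funext fun x => by
    rw [hh, mul_log_add_one_sub_mul_log_one_sub]
  have hΔI' : ∀ γ, ΔI γ = crossRate h A B γ
      - 2 * μl * (1 - μl) * (log 2 - binEntropy (γ / (γ + 1))) := fun γ => by
    rw [hΔI, crossRate, hneg]; simp only [one_div, binEntropy_two_inv]; ring
  have hstart : ΔI (A / B) < 0 := by
    have hfrac : A / B / (A / B + 1) = A / (A + B) := by field_simp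
    have hhalf : A / (A + B) ≠ 2⁻¹ := by
      rw [ne_eq, ← one_div, div_eq_div_iff (by positivity) two_ne_zero]; linarith
    rw [hΔI', crossRate_div_self h hB0 hBA, hfrac]
    have := binEntropy_lt_log_two.2 hhalf
    have : 0 < μl * (1 - μl) := by nlinarith
    nlinarith
  have hderiv_neg : ∀ γ, A / B < γ → deriv ΔI γ < 0 := fun γ hγ =>
    hderiv γ hγ ▸ sub_mul_one_sub_two_mul_mul_log_div_neg hlh hμl (h1AB.trans hγ)
  have hcont : ContinuousOn ΔI (Ici (A / B)) := fun γ hγ => by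
    have hγ1 : 1 < γ := h1AB.trans_le hγ
    have hcr := continuousAt_crossRate (h := h) (by rw [hneg]; fun_prop) hA0.ne' hB0.ne'
      (by positivity) (by nlinarith : γ ^ 2 ≠ 1)
    rw [funext hΔI']
    exact (hcr.sub (by fun_prop (disch := positivity))).continuousWithinAt
  have hanti : StrictAntiOn ΔI (Ici (A / B)) :=
    strictAntiOn_of_deriv_neg (convex_Ici _) hcont fun x hx => hderiv_neg x (by simpa using hx)
  exact ⟨hstart, hderiv_neg, fun γ hγ =>
    (hanti.antitoneOn self_mem_Ici hγ hγ).trans_lt hstart⟩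

/-- If μ̲ > 1/2, then ΔI(γ) := I((μ̄,μ̲);γ) - I((μ̲,μ̲);γ) satisfies ΔI(A/B) < 0,
its derivative (μ̄-μ̲)(1-2μ̲)ln γ/(γ+1)² is negative for γ > A/B, and hence
ΔI(γ) < 0 for all γ ≥ A/B. -/
theorem stmt_14 (μl μh : ℝ) (h0 : 0 < μl) (hlh : μl < μh) (h1 : μh < 1)
    (hμl : 1 / 2 < μl)
    (A B : ℝ) (hA : A = μh * (1 - μl)) (hB : B = μl * (1 - μh))
    (h : ℝ → ℝ)
    (hh : ∀ x : ℝ, h x = x * Real.log x + (1 - x) * Real.log (1 - x))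
    (ΔI : ℝ → ℝ)
    (hΔI : ∀ γ : ℝ, ΔI γ =
      (A * h (γ * (γ * A - B) / ((γ ^ 2 - 1) * A))
        + B * h ((γ * A - B) / ((γ ^ 2 - 1) * B))
        - (A + B) * h ((γ * A - B) / ((γ - 1) * (A + B))))
      - 2 * μl * (1 - μl) * (h (γ / (γ + 1)) - h (1 / 2)))
    (hderiv : ∀ γ : ℝ, A / B < γ →
      deriv ΔI γ = (μh - μl) * (1 - 2 * μl) * Real.log γ / (γ + 1) ^ 2) :
    ΔI (A / B) < 0 ∧
    (∀ γ : ℝ, A / B < γ → deriv ΔI γ < 0) ∧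
    (∀ γ : ℝ, A / B ≤ γ → ΔI γ < 0) :=
  stmt_14_general μl μh hlh h1 hμl A B hA hB h hh ΔI hΔI hderiv
end
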